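/- arXiv:1902.07578 — 3 statements merged into one kernel-verified Lean document; each statement's English description precedes it below -/
import Mathlib

section
/- If a homeomorphism f of a compact metric space X has the L-shadowing property, then f has the classical shadowing property. -/
open Filter Metric Set Topology

variable {X : Type*} [MetricSpace X]

/-- `f^k x` for `k : ℤ`, where `f` is a homeomorphism. -/
def iterZ (f : X ≃ₜ X) (k : ℤ) (x : X) : X :=
  if 0 ≤ k then (⇑f)^[k.toNat] x else (⇑f.symm)^[(-k).toNat] x

/-- The classical shadowing property. -/
def Shadowing (f : X ≃ₜ X) : Prop :=
  ∀ ε > (0:ℝ), ∃ δ > (0:ℝ), ∀ x : ℤ → X,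
    (∀ k : ℤ, dist (f (x k)) (x (k+1)) < δ) →
    ∃ z : X, ∀ k : ℤ, dist (iterZ f k z) (x k) < ε

/-- The L-shadowing property. -/
def LShadowing (f : X ≃ₜ X) : Prop :=
  ∀ ε > (0:ℝ), ∃ δ > (0:ℝ), ∀ x : ℤ → X,
    (∀ k : ℤ, dist (f (x k)) (x (k+1)) ≤ δ) →
    Tendsto (fun k : ℤ => dist (f (x k)) (x (k+1))) cofinite (nhds 0) →
    ∃ z : X, (∀ k : ℤ, dist (iterZ f k z) (x k) ≤ ε) ∧
      Tendsto (fun k : ℤ => dist (iterZ f k z) (x k)) cofinite (nhds 0)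

/-- The stable set of `x`. -/
def stableSet (f : X ≃ₜ X) (x : X) : Set X :=
  {y | Tendsto (fun n : ℕ => dist ((⇑f)^[n] x) ((⇑f)^[n] y)) atTop (nhds 0)}

/-- The unstable set of `x`. -/
def unstableSet (f : X ≃ₜ X) (x : X) : Set X := stableSet f.symm x

/-- The local stable set of size `ε` of `x`. -/
def localStable (f : X ≃ₜ X) (ε : ℝ) (x : X) : Set X :=
  {y | ∀ n : ℕ, dist ((⇑f)^[n] x) ((⇑f)^[n] y) ≤ ε}

/-- The local unstable set of size `ε` of `x`. -/
def localUnstable (f : X ≃ₜ X) (ε : ℝ) (x : X) : Set X := localStable f.symm ε x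

/-- `V^s_ε(x) = W^s(x) ∩ W^s_ε(x)`. -/
def Vs (f : X ≃ₜ X) (ε : ℝ) (x : X) : Set X := stableSet f x ∩ localStable f ε x

/-- `V^u_ε(x) = W^u(x) ∩ W^u_ε(x)`. -/
def Vu (f : X ≃ₜ X) (ε : ℝ) (x : X) : Set X := unstableSet f x ∩ localUnstable f ε x

/-- The limit shadowing property. -/
def LimitShadowing (f : X ≃ₜ X) : Prop :=
  ∀ x : ℕ → X, Tendsto (fun k : ℕ => dist (f (x k)) (x (k+1))) atTop (nhds 0) →
    ∃ y : X, Tendsto (fun k : ℕ => dist ((⇑f)^[k] y) (x k)) atTop (nhds 0)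

/-- The two-sided limit shadowing property. -/
def TwoSidedLimitShadowing (f : X ≃ₜ X) : Prop :=
  ∀ x : ℤ → X, Tendsto (fun k : ℤ => dist (f (x k)) (x (k+1))) cofinite (nhds 0) →
    ∃ y : X, Tendsto (fun k : ℤ => dist (iterZ f k y) (x k)) cofinite (nhds 0)

/-- A non-wandering point. -/
def NonWandering (f : X ≃ₜ X) (x : X) : Prop :=
  ∀ U : Set X, IsOpen U → x ∈ U → ∃ k : ℕ, 0 < k ∧ ((⇑f)^[k] '' U ∩ U).Nonempty

/-- The non-wandering set. -/
def omegaSet (f : X ≃ₜ X) : Set X := {x | NonWandering f x}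

/-- Topologically mixing. -/
def TopMixing (f : X ≃ₜ X) : Prop :=
  ∀ U V : Set X, IsOpen U → IsOpen V → U.Nonempty → V.Nonempty →
    ∃ n : ℕ, 0 < n ∧ ∀ k ≥ n, ((⇑f)^[k] '' U ∩ V).Nonempty

/-- `f` is expansive on the set `A` (as a subsystem). -/
def ExpansiveOn (f : X ≃ₜ X) (A : Set X) : Prop :=
  ∃ c > (0:ℝ), ∀ x ∈ A, ∀ y ∈ A,
    (∀ k : ℤ, dist (iterZ f k x) (iterZ f k y) ≤ c) → x = y

/-- The dynamical ball `Γ_δ(x)`. -/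
def dynBall (f : X ≃ₜ X) (δ : ℝ) (x : X) : Set X :=
  {y | ∀ k : ℤ, dist (iterZ f k x) (iterZ f k y) ≤ δ}

/-- There is a periodic `ε`-pseudo-orbit containing both `x` and `y`. -/
def ChainRel (f : X ≃ₜ X) (ε : ℝ) (x y : X) : Prop :=
  ∃ (n : ℕ) (z : ℕ → X), 0 < n ∧ z 0 = x ∧ z n = x ∧ (∃ i ≤ n, z i = y) ∧
    ∀ i < n, dist (f (z i)) (z (i+1)) < ε

/-- The chain recurrent class of `x`. -/
def chainClass (f : X ≃ₜ X) (x : X) : Set X := {y | ∀ ε > (0:ℝ), ChainRel f ε x y}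

/-- `h` is a semiconjugacy from `g` on `K` to the full shift on two symbols. -/
def SemiConjShift (g : X → X) (K : Set X) (h : X → (ℤ → Bool)) : Prop :=
  ContinuousOn h K ∧ (∀ s : ℤ → Bool, ∃ p ∈ K, h p = s) ∧
    ∀ p ∈ K, h (g p) = fun i => h p (i + 1)

/-- `f` admits arbitrarily small topological semi-horseshoes inside `C`. -/
def SmallHorseshoes (f : X ≃ₜ X) (C : Set X) : Prop :=
  ∀ ε > (0:ℝ), ∃ N : ℕ, 1 ≤ N ∧ ∃ K : Set X, K ⊆ C ∧ IsCompact K ∧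
    (⇑f)^[N] '' K = K ∧ (∀ k : ℤ, Metric.diam (iterZ f k '' K) ≤ ε) ∧
    ∃ h : X → (ℤ → Bool), SemiConjShift ((⇑f)^[N]) K h

lemma iterZ_zero (f : X ≃ₜ X) (x : X) : iterZ f 0 x = x := by
  simp [iterZ]

lemma iterZ_add_one (f : X ≃ₜ X) (m : ℤ) (x : X) :
    iterZ f (m + 1) x = f (iterZ f m x) := by
  unfold iterZ
  rcases le_or_gt 0 m with hm | hm
  · rw [if_pos hm, if_pos (by omega)]
    have h1 : (m + 1).toNat = m.toNat + 1 := by omega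
    rw [h1, Function.iterate_succ_apply']
  · rw [if_neg (show ¬ 0 ≤ m by omega)]
    rcases eq_or_lt_of_le (by omega : m + 1 ≤ 0) with h | h
    · rw [if_pos (show (0:ℤ) ≤ m + 1 by omega)]
      have h1 : (-m).toNat = 1 := by omega
      have h2 : (m + 1).toNat = 0 := by omega
      rw [h1, h2]
      simp
    · rw [if_neg (show ¬ (0:ℤ) ≤ m + 1 by omega)]
      have h1 : (-m).toNat = (-(m + 1)).toNat + 1 := by omega
      rw [h1, Function.iterate_succ_apply']
      simp

lemma iterZ_continuous (f : X ≃ₜ X) (k : ℤ) : Continuous (iterZ f k) := by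
  unfold iterZ
  split_ifs
  · exact f.continuous.iterate _
  · exact f.symm.continuous.iterate _

/-- L-shadowing implies the classical shadowing property. -/
theorem lshadowing_implies_shadowing [CompactSpace X] (f : X ≃ₜ X)
    (hf : LShadowing f) : Shadowing f := by
  intro ε hε
  obtain ⟨δ, hδ, hδ'⟩ := hf (ε / 2) (by linarith)
  refine ⟨δ, hδ, fun x hx => ?_⟩
  -- For each n, truncate the pseudo-orbit to a pseudo-orbit with eventually zero errors
  set y : ℕ → ℤ → X := fun n k =>
    if k < -(n : ℤ) then iterZ f (k + n) (x (-(n : ℤ)))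
    else if k ≤ (n : ℤ) then x k
    else iterZ f (k - n) (x n) with hy
  have hy_eq : ∀ (n : ℕ) (k : ℤ), (k < -(n : ℤ) ∨ (n : ℤ) ≤ k) →
      f (y n k) = y n (k + 1) := by
    intro n k hk
    rcases hk with hk | hk
    · simp only [hy, if_pos hk]
      rcases lt_or_ge (k + 1) (-(n : ℤ)) with h1 | h1
      · rw [if_pos h1, ← iterZ_add_one]
        congr 1
        ring
      · have hk1 : k + 1 = -(n : ℤ) := by omega
        rw [if_neg (by omega), if_pos (by omega), hk1]
        rw [← iterZ_add_one]
        have : k + (n : ℤ) + 1 = 0 := by omega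
        rw [this, iterZ_zero]
    · rcases eq_or_lt_of_le hk with h1 | h1
      · simp only [hy, if_neg (show ¬ k < -(n : ℤ) by omega),
          if_pos (le_of_eq h1.symm), if_neg (show ¬ k + 1 < -(n : ℤ) by omega),
          if_neg (show ¬ k + 1 ≤ (n : ℤ) by omega)]
        have h2 : k + 1 - (n : ℤ) = 0 + 1 := by omega
        rw [h2, iterZ_add_one, iterZ_zero, ← h1]
      · simp only [hy, if_neg (show ¬ k < -(n : ℤ) by omega),
          if_neg (show ¬ k ≤ (n : ℤ) by omega),
          if_neg (show ¬ k + 1 < -(n : ℤ) by omega),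
          if_neg (show ¬ k + 1 ≤ (n : ℤ) by omega)]
        rw [← iterZ_add_one]
        congr 1
        ring
  have hy_le : ∀ (n : ℕ) (k : ℤ), dist (f (y n k)) (y n (k + 1)) ≤ δ := by
    intro n k
    rcases lt_or_ge k (-(n : ℤ)) with h | h
    · rw [hy_eq n k (Or.inl h), dist_self]; exact le_of_lt hδ
    rcases lt_or_ge k (n : ℤ) with h2 | h2
    · have e1 : y n k = x k := by
        simp only [hy, if_neg (show ¬ k < -(n : ℤ) by omega),
          if_pos (show k ≤ (n : ℤ) by omega)]
      have e2 : y n (k + 1) = x (k + 1) := by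
        simp only [hy, if_neg (show ¬ k + 1 < -(n : ℤ) by omega),
          if_pos (show k + 1 ≤ (n : ℤ) by omega)]
      rw [e1, e2]; exact le_of_lt (hx k)
    · rw [hy_eq n k (Or.inr h2), dist_self]; exact le_of_lt hδ
  have hy_tendsto : ∀ n : ℕ,
      Tendsto (fun k : ℤ => dist (f (y n k)) (y n (k + 1))) cofinite (nhds 0) := by
    intro n
    have hev : ∀ᶠ k : ℤ in cofinite, dist (f (y n k)) (y n (k + 1)) = 0 := by
      rw [Filter.eventually_cofinite]
      apply Set.Finite.subset (Set.finite_Icc (-(n : ℤ)) (n : ℤ))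
      intro k hk
      simp only [Set.mem_setOf_eq] at hk
      by_contra hmem
      simp only [Set.mem_Icc, not_and_or, not_le] at hmem
      apply hk
      rcases hmem with h | h
      · rw [hy_eq n k (Or.inl h), dist_self]
      · rw [hy_eq n k (Or.inr (le_of_lt h)), dist_self]
    exact (tendsto_const_nhds : Tendsto (fun _ : ℤ => (0:ℝ)) cofinite (nhds 0)).congr' (hev.mono fun k h => h.symm)
  choose z hz _ using fun n => hδ' (y n) (hy_le n) (hy_tendsto n)
  obtain ⟨w, -, φ, hφ, hw⟩ := isCompact_univ.tendsto_subseq (fun n => Set.mem_univ (z n))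
  refine ⟨w, fun k => ?_⟩
  have hcont : Tendsto (fun j => dist (iterZ f k (z (φ j))) (x k)) atTop
      (nhds (dist (iterZ f k w) (x k))) :=
    (((iterZ_continuous f k).tendsto w).comp hw).dist tendsto_const_nhds
  have hle : dist (iterZ f k w) (x k) ≤ ε / 2 := by
    apply le_of_tendsto hcont
    filter_upwards [Filter.eventually_ge_atTop k.natAbs] with j hj
    have hjk : k.natAbs ≤ φ j := le_trans hj (hφ.le_apply)
    have e1 : y (φ j) k = x k := by
      simp only [hy, if_neg (show ¬ k < -((φ j : ℕ) : ℤ) by omega),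
        if_pos (show k ≤ ((φ j : ℕ) : ℤ) by omega)]
    have := hz (φ j) k
    rwa [e1] at this
  linarith
end

section
/- Suppose f is a homeomorphism of a compact metric space with the shadowing property, c>0 is given, and δ>0 is such that d(a,b)<2δ implies V^s_c(a) ∩ V^u_c(b) ≠ ∅. Let (x_k)_{k∈ℕ} be a limit pseudo-orbit and p∈X satisfy d(f^k(p),x_k)<δ for all k≥0. Then for every ε∈(0,δ) there exist q∈X and natural numbers M<N such that d(f^k(q),x_k) ≤ c+δ for 0≤k≤M, d(f^k(q),x_k) ≤ c+ε for M≤k≤N, and d(f^k(q),x_k) ≤ ε for k≥N. -/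
open Filter Metric Set Topology

variable {X : Type*} [MetricSpace X]

lemma iterZ_natCast' (f : X ≃ₜ X) (n : ℕ) (y : X) : iterZ f (n : ℤ) y = (⇑f)^[n] y := by
  simp [iterZ]

lemma iterZ_succ' (f : X ≃ₜ X) (k : ℤ) (y : X) : f (iterZ f k y) = iterZ f (k+1) y := by
  unfold iterZ
  rcases le_or_gt 0 k with h | h
  · rw [if_pos h, if_pos (by omega)]
    have hk : (k+1).toNat = k.toNat + 1 := by omega
    rw [hk, Function.iterate_succ_apply']
  · rw [if_neg (by omega)]
    have hm : (-k).toNat = (-(k+1)).toNat + 1 := by omega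
    rw [hm, Function.iterate_succ_apply']
    rw [f.apply_symm_apply]
    rcases le_or_gt 0 (k+1) with h1 | h1
    · have : k + 1 = 0 := by omega
      rw [if_pos h1]
      have h2 : (-(k+1)).toNat = 0 := by omega
      have h3 : (k+1).toNat = 0 := by omega
      rw [h2, h3]
      simp
    · rw [if_neg (by omega)]

theorem limit_shadowing_step' [CompactSpace X] (f : X ≃ₜ X)
    (hsh : Shadowing f) (c δ : ℝ) (hc : 0 < c) (hδ : 0 < δ)
    (hV : ∀ a b : X, dist a b < 2 * δ → (Vs f c a ∩ Vu f c b).Nonempty)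
    (x : ℕ → X) (hx : Tendsto (fun k : ℕ => dist (f (x k)) (x (k+1))) atTop (nhds 0))
    (p : X) (hp : ∀ k : ℕ, dist ((⇑f)^[k] p) (x k) < δ) :
    ∀ ε : ℝ, 0 < ε → ε < δ → ∃ (q : X) (M N : ℕ), M < N ∧
      (∀ k ≤ M, dist ((⇑f)^[k] q) (x k) ≤ c + δ) ∧
      (∀ k, M ≤ k → k ≤ N → dist ((⇑f)^[k] q) (x k) ≤ c + ε) ∧
      (∀ k, N ≤ k → dist ((⇑f)^[k] q) (x k) ≤ ε) := by
  intro ε hε hεδ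
  obtain ⟨δ', hδ', hsh'⟩ := hsh (ε/2) (by linarith)
  have hev : ∀ᶠ k in atTop, dist (f (x k)) (x (k+1)) < δ' :=
    hx.eventually (gt_mem_nhds hδ')
  rw [eventually_atTop] at hev
  obtain ⟨M, hM⟩ := hev
  -- define the two-sided pseudo-orbit
  set w : ℤ → X := fun k => if 0 ≤ k then x (M + k.toNat) else iterZ f k (x M) with hw
  have hwp : ∀ k : ℤ, dist (f (w k)) (w (k+1)) < δ' := by
    intro k
    rcases le_or_gt 0 k with h | h
    · have h1 : w k = x (M + k.toNat) := by simp [hw, h]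
      have h2 : w (k+1) = x (M + k.toNat + 1) := by
        have : 0 ≤ k + 1 := by omega
        have ht : M + (k+1).toNat = M + k.toNat + 1 := by omega
        simp only [hw, if_pos this, ht]
      rw [h1, h2]
      exact hM (M + k.toNat) (by omega)
    · have h1 : w k = iterZ f k (x M) := by simp [hw, not_le.2 h]
      have h2 : f (w k) = iterZ f (k+1) (x M) := by rw [h1, iterZ_succ']
      have h3 : w (k+1) = iterZ f (k+1) (x M) := by
        rcases le_or_gt 0 (k+1) with h4 | h4
        · have hk0 : k + 1 = 0 := by omega
          simp only [hw, if_pos h4, hk0]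
          simp [iterZ]
        · simp [hw, not_le.2 h4]
      rw [h2, h3, dist_self]
      exact hδ'
  obtain ⟨r, hr⟩ := hsh' w hwp
  have hrn : ∀ n : ℕ, dist ((⇑f)^[n] r) (x (M + n)) < ε/2 := by
    intro n
    have := hr (n : ℤ)
    rw [iterZ_natCast'] at this
    have hwn : w (n : ℤ) = x (M + n) := by
      simp [hw]
    rwa [hwn] at this
  have hab : dist r ((⇑f)^[M] p) < 2 * δ := by
    have h1 : dist r (x M) < ε/2 := by
      have := hrn 0
      simpa using this
    have h2 : dist (x M) ((⇑f)^[M] p) < δ := by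
      rw [dist_comm]; exact hp M
    calc dist r ((⇑f)^[M] p) ≤ dist r (x M) + dist (x M) ((⇑f)^[M] p) := dist_triangle _ _ _
      _ < ε/2 + δ := by linarith
      _ < 2 * δ := by linarith
  obtain ⟨z, hzs, hzu⟩ := hV r ((⇑f)^[M] p) hab
  have hzst : Tendsto (fun n : ℕ => dist ((⇑f)^[n] r) ((⇑f)^[n] z)) atTop (nhds 0) := hzs.1
  have hzsc : ∀ n : ℕ, dist ((⇑f)^[n] r) ((⇑f)^[n] z) ≤ c := hzs.2
  have hzuc : ∀ n : ℕ, dist ((⇑f.symm)^[n] ((⇑f)^[M] p)) ((⇑f.symm)^[n] z) ≤ c := hzu.2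
  have hev2 : ∀ᶠ n in atTop, dist ((⇑f)^[n] r) ((⇑f)^[n] z) < ε/2 :=
    hzst.eventually (gt_mem_nhds (by linarith))
  rw [eventually_atTop] at hev2
  obtain ⟨N₁, hN₁⟩ := hev2
  -- the shadowing point
  set q : X := (⇑f.symm)^[M] z with hq
  have hinv : ∀ (n : ℕ) (y : X), (⇑f)^[n] ((⇑f.symm)^[n] y) = y :=
    fun n y => (Function.LeftInverse.iterate (fun u => f.apply_symm_apply u) n) y
  have hinv' : ∀ (n : ℕ) (y : X), (⇑f.symm)^[n] ((⇑f)^[n] y) = y :=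
    fun n y => (Function.LeftInverse.iterate (fun u => f.symm_apply_apply u) n) y
  have hqlow : ∀ k ≤ M, (⇑f)^[k] q = (⇑f.symm)^[M-k] z := by
    intro k hk
    have h1 : (⇑f.symm)^[M] z = (⇑f.symm)^[k] ((⇑f.symm)^[M-k] z) := by
      rw [← Function.iterate_add_apply]
      congr 1
      omega
    rw [hq, h1, hinv]
  have hqhigh : ∀ k, M ≤ k → (⇑f)^[k] q = (⇑f)^[k-M] z := by
    intro k hk
    have h1 : (⇑f)^[k] q = (⇑f)^[k-M] ((⇑f)^[M] q) := by
      rw [← Function.iterate_add_apply]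
      congr 1
      omega
    rw [h1, hq, hinv]
  have hplow : ∀ k ≤ M, (⇑f.symm)^[M-k] ((⇑f)^[M] p) = (⇑f)^[k] p := by
    intro k hk
    have h1 : (⇑f)^[M] p = (⇑f)^[M-k] ((⇑f)^[k] p) := by
      rw [← Function.iterate_add_apply]
      congr 1
      omega
    rw [h1, hinv']
  refine ⟨q, M, M + N₁ + 1, by omega, ?_, ?_, ?_⟩
  · intro k hk
    have h1 : dist ((⇑f)^[k] q) ((⇑f)^[k] p) ≤ c := by
      rw [hqlow k hk, ← hplow k hk, dist_comm]
      exact hzuc (M - k)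
    calc dist ((⇑f)^[k] q) (x k)
        ≤ dist ((⇑f)^[k] q) ((⇑f)^[k] p) + dist ((⇑f)^[k] p) (x k) := dist_triangle _ _ _
      _ ≤ c + δ := by have := hp k; linarith
  · intro k hk1 _
    have h1 : dist ((⇑f)^[k] q) ((⇑f)^[k-M] r) ≤ c := by
      rw [hqhigh k hk1, dist_comm]
      exact hzsc (k - M)
    have h2 : dist ((⇑f)^[k-M] r) (x k) < ε/2 := by
      have := hrn (k - M)
      have hM' : M + (k - M) = k := by omega
      rwa [hM'] at this
    calc dist ((⇑f)^[k] q) (x k)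
        ≤ dist ((⇑f)^[k] q) ((⇑f)^[k-M] r) + dist ((⇑f)^[k-M] r) (x k) := dist_triangle _ _ _
      _ ≤ c + ε := by linarith
  · intro k hk
    have hk1 : M ≤ k := by omega
    have h1 : dist ((⇑f)^[k] q) ((⇑f)^[k-M] r) < ε/2 := by
      rw [hqhigh k hk1, dist_comm]
      exact hN₁ (k - M) (by omega)
    have h2 : dist ((⇑f)^[k-M] r) (x k) < ε/2 := by
      have := hrn (k - M)
      have hM' : M + (k - M) = k := by omega
      rwa [hM'] at this
    calc dist ((⇑f)^[k] q) (x k)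
        ≤ dist ((⇑f)^[k] q) ((⇑f)^[k-M] r) + dist ((⇑f)^[k-M] r) (x k) := dist_triangle _ _ _
      _ ≤ ε := by linarith

/-- the induction step towards limit shadowing. -/
theorem limit_shadowing_step [CompactSpace X] (f : X ≃ₜ X)
    (hsh : Shadowing f) (c δ : ℝ) (hc : 0 < c) (hδ : 0 < δ)
    (hV : ∀ a b : X, dist a b < 2 * δ → (Vs f c a ∩ Vu f c b).Nonempty)
    (x : ℕ → X) (hx : Tendsto (fun k : ℕ => dist (f (x k)) (x (k+1))) atTop (nhds 0))
    (p : X) (hp : ∀ k : ℕ, dist ((⇑f)^[k] p) (x k) < δ) :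
    ∀ ε : ℝ, 0 < ε → ε < δ → ∃ (q : X) (M N : ℕ), M < N ∧
      (∀ k ≤ M, dist ((⇑f)^[k] q) (x k) ≤ c + δ) ∧
      (∀ k, M ≤ k → k ≤ N → dist ((⇑f)^[k] q) (x k) ≤ c + ε) ∧
      (∀ k, N ≤ k → dist ((⇑f)^[k] q) (x k) ≤ ε) :=
  limit_shadowing_step' f hsh c δ hc hδ hV x hx p hp
end

section
/- If a topologically mixing homeomorphism of a compact metric space has the L-shadowing property, then it has the two-sided limit shadowing property. -/
open Filter Metric Set Topology

variable {X : Type*} [MetricSpace X]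

/-!
Given a sequence `x` whose jumps `d(f(x k), x (k+1))` tend to `0`, choose `N` so large that all
jumps with `|k| > N` are below the `δ` of L-shadowing for `ε = 1`. Compactness makes mixing
uniform at scale `δ`, so there is an orbit segment of length `2N+1` starting `δ`-close to
`f (x (-N-1))` and ending `δ`-close to `x (N+1)`. Splicing it into `x` on `[-N, N]` yields a
`δ`-pseudo-orbit whose jumps still tend to `0`; the point that L-shadows it shadows `x`
asymptotically, because the two sequences differ at finitely many indices only.
-/

namespace TopMixing

variable {f : X ≃ₜ X}

theorem eventually_nonempty_inter (hmix : TopMixing f) {U V : Set X} (hU : IsOpen U)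
    (hV : IsOpen V) (hUne : U.Nonempty) (hVne : V.Nonempty) :
    ∀ᶠ k in atTop, ((⇑f)^[k] '' U ∩ V).Nonempty := by
  obtain ⟨n, -, hn⟩ := hmix U V hU hV hUne hVne
  exact eventually_atTop.2 ⟨n, hn⟩

theorem eventually_forall_exists_dist_lt [CompactSpace X] (hmix : TopMixing f) {δ : ℝ}
    (hδ : 0 < δ) :
    ∀ᶠ k in atTop, ∀ p q : X, ∃ z : X, dist z p < δ ∧ dist ((⇑f)^[k] z) q < δ := by
  obtain ⟨t, -, ht, hcover⟩ :=
    finite_cover_balls_of_compact (isCompact_univ : IsCompact (univ : Set X)) (half_pos hδ)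
  have hmeet : ∀ᶠ k in atTop, ∀ c ∈ t ×ˢ t,
      ((⇑f)^[k] '' ball c.1 (δ / 2) ∩ ball c.2 (δ / 2)).Nonempty :=
    (eventually_all_finite (ht.prod ht)).2 fun c _ =>
      hmix.eventually_nonempty_inter isOpen_ball isOpen_ball
        (nonempty_ball.2 (half_pos hδ)) (nonempty_ball.2 (half_pos hδ))
  filter_upwards [hmeet] with k hk p q
  obtain ⟨c, hct, hpc⟩ := mem_iUnion₂.1 (hcover (mem_univ p))
  obtain ⟨c', hct', hqc⟩ := mem_iUnion₂.1 (hcover (mem_univ q))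
  obtain ⟨-, ⟨z, hzc, rfl⟩, hzc'⟩ := hk (c, c') (mk_mem_prod hct hct')
  refine ⟨z, ?_, ?_⟩
  · linarith [dist_triangle_right z p c, mem_ball.1 hzc, mem_ball.1 hpc]
  · linarith [dist_triangle_right ((⇑f)^[k] z) q c', mem_ball.1 hzc', mem_ball.1 hqc]

end TopMixing

theorem Int.exists_forall_lt_abs_of_eventually_cofinite {p : ℤ → Prop}
    (h : ∀ᶠ k in cofinite, p k) : ∃ N : ℕ, ∀ k : ℤ, (N : ℤ) < |k| → p k := by
  rw [Int.cofinite_eq, eventually_sup, eventually_atBot, eventually_atTop] at h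
  obtain ⟨⟨a, ha⟩, ⟨b, hb⟩⟩ := h
  refine ⟨max a.natAbs b.natAbs, fun k hk => ?_⟩
  rcases lt_abs.1 hk with hk | hk
  · exact hb k (by omega)
  · exact ha k (by omega)

section PseudoOrbit

variable {α : Type*}

theorem dist_map_succ_eventuallyEq [PseudoMetricSpace α] (f : α → α) {x y : ℤ → α}
    (h : x =ᶠ[cofinite] y) :
    (fun k => dist (f (x k)) (x (k + 1))) =ᶠ[cofinite] fun k => dist (f (y k)) (y (k + 1)) := by
  have hshift : x ∘ (· + 1) =ᶠ[cofinite] y ∘ (· + 1) :=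
    h.comp_tendsto (add_left_injective 1).tendsto_cofinite
  filter_upwards [h, hshift] with k hk hk'
  simp only [Function.comp_apply] at hk'
  rw [hk, hk']

def splice (f : α → α) (x : ℤ → α) (N : ℕ) (z : α) (k : ℤ) : α :=
  if |k| ≤ N then f^[(k + N).toNat] z else x k

variable (f : α → α) (x : ℤ → α) (N : ℕ) (z : α)

theorem splice_of_abs_le {k : ℤ} (hk : |k| ≤ N) : splice f x N z k = f^[(k + N).toNat] z :=
  if_pos hk

theorem splice_of_lt_abs {k : ℤ} (hk : (N : ℤ) < |k|) : splice f x N z k = x k :=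
  if_neg hk.not_ge

theorem splice_eventuallyEq : splice f x N z =ᶠ[cofinite] x :=
  eventually_cofinite.2 <| (finite_Icc (-(N : ℤ)) N).subset fun _ hk =>
    abs_le.1 (not_lt.1 fun h => hk (splice_of_lt_abs f x N z h))

theorem dist_splice_le [PseudoMetricSpace α] {η : ℝ} (hη : 0 ≤ η)
    (hx : ∀ k : ℤ, (N : ℤ) < |k| → dist (f (x k)) (x (k + 1)) ≤ η)
    (hleft : dist (f (x (-N - 1))) z ≤ η) (hright : dist (f^[2 * N + 1] z) (x (N + 1)) ≤ η)
    (k : ℤ) : dist (f (splice f x N z k)) (splice f x N z (k + 1)) ≤ η := by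
  rcases lt_trichotomy k (-N - 1) with hk | rfl | hk
  · rw [splice_of_lt_abs f x N z (by rw [lt_abs]; omega),
      splice_of_lt_abs f x N z (by rw [lt_abs]; omega)]
    exact hx k (by rw [lt_abs]; omega)
  · rw [splice_of_lt_abs f x N z (by rw [lt_abs]; omega),
      splice_of_abs_le f x N z (by rw [abs_le]; omega),
      show (-(N : ℤ) - 1 + 1 + N).toNat = 0 by omega, Function.iterate_zero_apply]
    exact hleft
  rcases lt_or_ge k N with hk' | hk'
  · rw [splice_of_abs_le f x N z (by rw [abs_le]; omega),
      splice_of_abs_le f x N z (by rw [abs_le]; omega),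
      show (k + 1 + N).toNat = (k + N).toNat + 1 by omega, Function.iterate_succ_apply',
      dist_self]
    exact hη
  rcases hk'.eq_or_lt with rfl | hk'
  · rw [splice_of_abs_le f x N z (by rw [abs_le]; omega),
      splice_of_lt_abs f x N z (by rw [lt_abs]; omega),
      show ((N : ℤ) + N).toNat = 2 * N by omega, ← Function.iterate_succ_apply' f]
    exact hright
  · rw [splice_of_lt_abs f x N z (by rw [lt_abs]; omega),
      splice_of_lt_abs f x N z (by rw [lt_abs]; omega)]
    exact hx k (by rw [lt_abs]; omega)

end PseudoOrbit

/-- mixing plus L-shadowing implies two-sided limit shadowing. -/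
theorem twoSided_of_mixing_lshadowing [CompactSpace X] (f : X ≃ₜ X)
    (hmix : TopMixing f) (hL : LShadowing f) : TwoSidedLimitShadowing f := by
  intro x hx
  obtain ⟨δ, hδ, hshadow⟩ := hL 1 one_pos
  obtain ⟨N₀, hN₀⟩ := Int.exists_forall_lt_abs_of_eventually_cofinite
    (hx.eventually (ge_mem_nhds hδ))
  obtain ⟨n, hn⟩ := eventually_atTop.1 (hmix.eventually_forall_exists_dist_lt hδ)
  set N := N₀ + n
  obtain ⟨z, hleft, hright⟩ := hn (2 * N + 1) (by omega) (f (x (-N - 1))) (x (N + 1))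
  have hjumps := dist_splice_le f x N z hδ.le
    (fun k hk => hN₀ k ((Nat.cast_le.2 (N₀.le_add_right n)).trans_lt hk))
    (dist_comm z _ ▸ hleft.le) hright.le
  have hspliced := splice_eventuallyEq f x N z
  obtain ⟨w, -, hw⟩ := hshadow _ hjumps (hx.congr' (dist_map_succ_eventuallyEq f hspliced).symm)
  refine ⟨w, hw.congr' ?_⟩
  filter_upwards [hspliced] with k hk
  rw [hk]
end
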